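/- Let 1 ≤ p < ∞ and let g : Γ → ℂ satisfy ∫_Γ |g(ζ)|^p |dζ| < ∞. Define F on Ω₊ by F(ζ₀ + iτ) = ∫_Γ K_{iτ}(ζ, ζ₀) g(ζ) dζ for ζ₀ ∈ Γ and τ > 0 (every point of Ω₊ is uniquely of the form ζ₀ + iτ with ζ₀ ∈ Γ, τ > 0). Then sup_{τ>0} ∫_Γ |F(ζ + iτ)|^p |dζ| < ∞. -/

import Mathlib

open Complex MeasureTheory Filter Set
open scoped ENNReal Real Topology BigOperators

noncomputable section

/-- The boundary curve `ζ(u) = u + i·a(u)`. -/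
def zetaC (a : ℝ → ℝ) (u : ℝ) : ℂ := (u : ℂ) + (a u : ℂ) * Complex.I

/-- The Lipschitz domain above the curve: `Ω₊ = {u + iv : v > a(u)}`. -/
def OmegaP (a : ℝ → ℝ) : Set ℂ := {w : ℂ | a w.re < w.im}

/-- The domain below the curve: `Ω₋ = {u + iv : v < a(u)}`. -/
def OmegaM (a : ℝ → ℝ) : Set ℂ := {w : ℂ | w.im < a w.re}

/-- Arc-length density `√(1 + a′(u)²)`. -/
def arcDen (a : ℝ → ℝ) (u : ℝ) : ℝ := Real.sqrt (1 + (deriv a u) ^ 2)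

/-- `∫_Γ |F(ζ + iτ)|^p |dζ|`, as an extended nonnegative real. -/
def bdryInt (a : ℝ → ℝ) (p : ℝ) (F : ℂ → ℂ) (τ : ℝ) : ℝ≥0∞ :=
  ∫⁻ u : ℝ, ENNReal.ofReal (‖F (zetaC a u + (τ : ℂ) * Complex.I)‖ ^ p * arcDen a u)

/-- `‖F‖_{H^p(Ω₊)}^p = sup_{τ>0} ∫_Γ |F(ζ + iτ)|^p |dζ|`. -/
def HpPow (a : ℝ → ℝ) (p : ℝ) (F : ℂ → ℂ) : ℝ≥0∞ :=
  ⨆ (τ : ℝ) (_ : 0 < τ), bdryInt a p F τ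

/-- `‖F‖_{H^p(Ω₊)}`. -/
def HpNorm (a : ℝ → ℝ) (p : ℝ) (F : ℂ → ℂ) : ℝ≥0∞ := HpPow a p F ^ (1 / p)

/-- Membership in the Hardy space `H^p(Ω₊)`. -/
def MemHp (a : ℝ → ℝ) (p : ℝ) (F : ℂ → ℂ) : Prop :=
  DifferentiableOn ℂ F (OmegaP a) ∧ HpPow a p F < ⊤

/-- The upper half-plane `ℂ₊`. -/
def UHP : Set ℂ := {z : ℂ | 0 < z.im}

/-- `∫_ℝ |f(x + iy)|^p dx`. -/
def planeInt (p : ℝ) (f : ℂ → ℂ) (y : ℝ) : ℝ≥0∞ :=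
  ∫⁻ x : ℝ, ENNReal.ofReal (‖f ((x : ℂ) + (y : ℂ) * Complex.I)‖ ^ p)

/-- `‖f‖_{H^p(ℂ₊)}^p`. -/
def HpPowU (p : ℝ) (f : ℂ → ℂ) : ℝ≥0∞ := ⨆ (y : ℝ) (_ : 0 < y), planeInt p f y

/-- `‖f‖_{H^p(ℂ₊)}`. -/
def HpNormU (p : ℝ) (f : ℂ → ℂ) : ℝ≥0∞ := HpPowU p f ^ (1 / p)

/-- Membership in the classical Hardy space `H^p(ℂ₊)`. -/
def MemHpU (p : ℝ) (f : ℂ → ℂ) : Prop :=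
  DifferentiableOn ℂ f UHP ∧ HpPowU p f < ⊤

/-- The transform `TF(z) = F(Φ(z))·(Φ′(z))^{1/p}`, where `(Φ′)^{1/p} := exp(L/p)`
for a holomorphic branch `L` of `log Φ′`. -/
def Tmap (p : ℝ) (Φ L F : ℂ → ℂ) : ℂ → ℂ :=
  fun z => F (Φ z) * Complex.exp (L z / (p : ℂ))

/-- The angle `φ₀` with `ζ′(u₀) = |ζ′(u₀)|·e^{iφ₀}`, `ζ′(u₀) = 1 + i·a′(u₀)`. -/
def phi0 (a : ℝ → ℝ) (u₀ : ℝ) : ℝ := Complex.arg (1 + Complex.I * Complex.ofReal (deriv a u₀))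

/-- The nontangential approach region `Ω_φ(ζ₀)`. -/
def OmegaSector (a : ℝ → ℝ) (u₀ : ℝ) (φ : ℝ) : Set ℂ :=
  {w : ℂ | ∃ r θ : ℝ, 0 < r ∧ φ < θ - phi0 a u₀ ∧ θ - phi0 a u₀ < Real.pi - φ ∧
    w = zetaC a u₀ + (r : ℂ) * Complex.exp ((θ : ℂ) * Complex.I)}

/-- `F` has nontangential boundary limit `l` at `ζ(u₀)`. -/
def HasNTLimit (a : ℝ → ℝ) (F : ℂ → ℂ) (u₀ : ℝ) (l : ℂ) : Prop :=
  ∀ φ ∈ Set.Ioo (0 : ℝ) (Real.pi / 2),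
    Filter.Tendsto F (nhdsWithin (zetaC a u₀) (OmegaSector a u₀ φ ∩ OmegaP a)) (nhds l)

/-- The kernel `K_z(ζ, ζ₀) = (1/(πi)) · z/((ζ − ζ₀)² − z²)`. -/
def Kker (z ζ ζ₀ : ℂ) : ℂ :=
  (1 / ((Real.pi : ℂ) * Complex.I)) * (z / ((ζ - ζ₀) ^ 2 - z ^ 2))

end

/-! Since `ζ(u) - ζ(u₀)` lies in the cone `|Im| ≤ M |Re|`, both factors of
`(ζ - ζ₀)² + τ² = (ζ - ζ₀ - iτ)(ζ - ζ₀ + iτ)` have squared modulus at least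
`((u - u₀)² + τ²) / (2 + M²)`, so `|K_{iτ}(ζ(u), ζ(u₀))| ≤ (2 + M²) P_τ(u - u₀)` with `P_τ` the
Cauchy density of scale `τ`, the Poisson kernel of the half-plane. Thus `|F(ζ(u₀) + iτ)|` is at most
a constant times the Poisson average of `|g|`; Jensen's inequality for the probability density
`P_τ` and Tonelli's theorem bound `∫ |F(ζ + iτ)|^p |dζ|` by a constant times `∫ |g|^p |dζ|`,
uniformly in `τ`. -/

open ProbabilityTheory
open scoped NNReal

theorem rpow_lintegral_le_lintegral_rpow {α : Type*} [MeasurableSpace α] {μ : Measure α}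
    {f : α → ℝ≥0∞} (hf : AEMeasurable f μ) (hμ : μ univ ≤ 1) {p : ℝ} (hp : 1 ≤ p) :
    (∫⁻ x, f x ∂μ) ^ p ≤ ∫⁻ x, f x ^ p ∂μ := by
  have hp₀ : 0 < p := one_pos.trans_le hp
  have h := eLpNorm'_le_eLpNorm'_mul_rpow_measure_univ one_pos hp hf.aestronglyMeasurable
  simp only [eLpNorm'_eq_lintegral_enorm, enorm_eq_self, ENNReal.rpow_one, div_one] at h
  calc (∫⁻ x, f x ∂μ) ^ p
      ≤ ((∫⁻ x, f x ^ p ∂μ) ^ (1 / p) * μ univ ^ (1 - 1 / p)) ^ p := by gcongr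
    _ ≤ ((∫⁻ x, f x ^ p ∂μ) ^ (1 / p)) ^ p := by
        gcongr
        exact mul_le_of_le_one_right'
          (ENNReal.rpow_le_one hμ (by simp [inv_le_one_of_one_le₀ hp]))
    _ = ∫⁻ x, f x ^ p ∂μ := by
        rw [← ENNReal.rpow_mul, one_div_mul_cancel hp₀.ne', ENNReal.rpow_one]

theorem lintegral_rpow_lintegral_mul_le {α β : Type*} [MeasurableSpace α] [MeasurableSpace β]
    {μ : Measure α} {ν : Measure β} [SFinite μ] [SFinite ν]
    {k : β → α → ℝ≥0∞} (hk : Measurable (Function.uncurry k))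
    (hk₁ : ∀ y, ∫⁻ x, k y x ∂μ ≤ 1) (hk₂ : ∀ x, ∫⁻ y, k y x ∂ν ≤ 1)
    {f : α → ℝ≥0∞} (hf : AEMeasurable f μ) {p : ℝ} (hp : 1 ≤ p) :
    ∫⁻ y, (∫⁻ x, k y x * f x ∂μ) ^ p ∂ν ≤ ∫⁻ x, f x ^ p ∂μ := by
  calc ∫⁻ y, (∫⁻ x, k y x * f x ∂μ) ^ p ∂ν
      ≤ ∫⁻ y, ∫⁻ x, k y x * f x ^ p ∂μ ∂ν := by
        refine lintegral_mono fun y => ?_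
        have hdensity : ∀ {h : α → ℝ≥0∞}, AEMeasurable h μ →
            ∫⁻ x, k y x * h x ∂μ = ∫⁻ x, h x ∂μ.withDensity (k y) := fun hh =>
          (lintegral_withDensity_eq_lintegral_mul₀ hk.of_uncurry_left.aemeasurable hh).symm
        rw [hdensity hf, hdensity (hf.pow_const p)]
        refine rpow_lintegral_le_lintegral_rpow
          (hf.mono_ac (withDensity_absolutelyContinuous _ _)) ?_ hp
        rw [withDensity_apply _ MeasurableSet.univ, Measure.restrict_univ]
        exact hk₁ y
    _ = ∫⁻ x, (∫⁻ y, k y x ∂ν) * f x ^ p ∂μ := by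
        rw [lintegral_lintegral_swap (hk.aemeasurable.mul (hf.pow_const p).comp_snd)]
        exact lintegral_congr fun x => lintegral_mul_const'' _ hk.of_uncurry_right.aemeasurable
    _ ≤ ∫⁻ x, f x ^ p ∂μ := lintegral_mono fun x => mul_le_of_le_one_left' (hk₂ x)

/-- For the worst case `e = ±M |d|` this is the positive definiteness of a quadratic form in
`(|d|, |t|)` with determinant `1` and trace `2 + M²`. -/
theorem sq_add_sq_le_mul_sq_add_sub_sq {M d e t : ℝ} (h : |e| ≤ M * |d|) :
    d ^ 2 + t ^ 2 ≤ (2 + M ^ 2) * (d ^ 2 + (e - t) ^ 2) := by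
  have he : e ^ 2 ≤ M ^ 2 * d ^ 2 := by
    rw [← sq_abs e, ← sq_abs d, ← mul_pow]; exact pow_le_pow_left₀ (abs_nonneg e) h 2
  nlinarith [sq_nonneg ((1 + M ^ 2) * (e - t) + e)]

theorem div_le_norm_sq_add_sq {M : ℝ} {w : ℂ} (hw : |w.im| ≤ M * |w.re|) (t : ℝ) :
    (w.re ^ 2 + t ^ 2) / (2 + M ^ 2) ≤ ‖w ^ 2 + (t : ℂ) ^ 2‖ := by
  have hfactor : w ^ 2 + (t : ℂ) ^ 2 = (w - t * I) * (w - (-t : ℝ) * I) := by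
    push_cast; linear_combination (t : ℂ) ^ 2 * I_sq
  have hfactor_le : ∀ s : ℝ, (w.re ^ 2 + s ^ 2) / (2 + M ^ 2) ≤ ‖w - s * I‖ ^ 2 := fun s => by
    rw [div_le_iff₀ (by positivity), ← normSq_eq_norm_sq, normSq_apply]
    have := sq_add_sq_le_mul_sq_add_sub_sq (t := s) hw
    simp only [sub_re, sub_im, mul_re, mul_im, ofReal_re, ofReal_im, I_re, I_im]
    nlinarith
  have h₁ := hfactor_le t
  have h₂ := hfactor_le (-t)
  rw [neg_sq] at h₂
  rw [hfactor, norm_mul, ← pow_le_pow_iff_left₀ (by positivity) (by positivity) two_ne_zero,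
    mul_pow, sq]
  exact mul_le_mul h₁ h₂ (by positivity) (sq_nonneg _)

theorem integral_mul_eq_zero_of_not_aestronglyMeasurable {α : Type*} [MeasurableSpace α]
    {μ : Measure α} {h g : α → ℂ} (hh : Measurable h) (hh₀ : ∀ x, h x ≠ 0)
    (hg : ¬AEStronglyMeasurable g μ) : ∫ x, h x * g x ∂μ = 0 :=
  integral_non_aestronglyMeasurable fun hhg => hg <|
    (hh.inv.aestronglyMeasurable.mul hhg).congr
      (ae_of_all _ fun x => inv_mul_cancel_left₀ (hh₀ x) _)

theorem cauchyPDF_comm (x₀ : ℝ) (γ : ℝ≥0) (x : ℝ) : cauchyPDF x₀ γ x = cauchyPDF x γ x₀ := by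
  rw [cauchyPDF_def, cauchyPDF_def, cauchyPDFReal_def, cauchyPDFReal_def, ← neg_sub, neg_sq]

theorem measurable_uncurry_cauchyPDF (γ : ℝ≥0) :
    Measurable (Function.uncurry fun x₀ x => cauchyPDF x₀ γ x) := by
  unfold Function.uncurry cauchyPDF cauchyPDFReal
  fun_prop

theorem norm_Kker_ofReal_mul_I (t : ℝ) (ζ ζ₀ : ℂ) :
    ‖Kker (t * I) ζ ζ₀‖ = π⁻¹ * |t| / ‖(ζ - ζ₀) ^ 2 + (t : ℂ) ^ 2‖ := by
  have hsq : ((t : ℂ) * I) ^ 2 = -(t : ℂ) ^ 2 := by rw [mul_pow, I_sq]; ring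
  simp [Kker, hsq, abs_of_pos Real.pi_pos, div_eq_mul_inv, mul_assoc]

section LipschitzGraph

variable {K : ℝ≥0} {a : ℝ → ℝ} {p : ℝ}

theorem re_zetaC_sub (u u₀ : ℝ) : (zetaC a u - zetaC a u₀).re = u - u₀ := by simp [zetaC]

theorem im_zetaC_sub (u u₀ : ℝ) : (zetaC a u - zetaC a u₀).im = a u - a u₀ := by simp [zetaC]

theorem abs_im_zetaC_sub_le (ha : LipschitzWith K a) (u u₀ : ℝ) :
    |(zetaC a u - zetaC a u₀).im| ≤ K * |(zetaC a u - zetaC a u₀).re| := by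
  rw [re_zetaC_sub, im_zetaC_sub, ← Real.dist_eq, ← Real.dist_eq]
  exact ha.dist_le_mul u u₀

theorem norm_one_add_I_mul_deriv (u : ℝ) : ‖1 + I * ((deriv a u : ℝ) : ℂ)‖ = arcDen a u := by
  simpa [arcDen, mul_comm I] using Complex.norm_add_mul_I 1 (deriv a u)

theorem one_le_arcDen (u : ℝ) : 1 ≤ arcDen a u :=
  Real.one_le_sqrt.mpr (le_add_of_nonneg_right (sq_nonneg _))

theorem arcDen_le (ha : LipschitzWith K a) (u : ℝ) : arcDen a u ≤ √(1 + K ^ 2) := by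
  have h := norm_deriv_le_of_lipschitz ha (x₀ := u)
  rw [Real.norm_eq_abs] at h
  exact Real.sqrt_le_sqrt (by nlinarith [abs_nonneg (deriv a u), sq_abs (deriv a u)])

theorem norm_Kker_le_mul_cauchyPDFReal (ha : LipschitzWith K a) (γ : ℝ≥0) (u u₀ : ℝ) :
    ‖Kker ((γ : ℝ) * I) (zetaC a u) (zetaC a u₀)‖ ≤ (2 + K ^ 2) * cauchyPDFReal u₀ γ u := by
  rcases eq_or_ne γ 0 with rfl | hγ
  · simp [Kker]
  have hγ₀ : (0 : ℝ) < γ := NNReal.coe_pos.mpr (pos_iff_ne_zero.mpr hγ)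
  have hden := div_le_norm_sq_add_sq (abs_im_zetaC_sub_le ha u u₀) γ
  rw [re_zetaC_sub] at hden
  rw [norm_Kker_ofReal_mul_I, cauchyPDFReal_def, abs_of_pos hγ₀]
  calc π⁻¹ * γ / ‖(zetaC a u - zetaC a u₀) ^ 2 + ((γ : ℝ) : ℂ) ^ 2‖
      ≤ π⁻¹ * γ / (((u - u₀) ^ 2 + γ ^ 2) / (2 + K ^ 2)) :=
        div_le_div_of_nonneg_left (by positivity) (by positivity) hden
    _ = (2 + K ^ 2) * (π⁻¹ * γ * ((u - u₀) ^ 2 + γ ^ 2)⁻¹) := by field_simp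

theorem Kker_ne_zero (ha : LipschitzWith K a) {γ : ℝ≥0} (hγ : γ ≠ 0) (u u₀ : ℝ) :
    Kker ((γ : ℝ) * I) (zetaC a u) (zetaC a u₀) ≠ 0 := by
  have hγ₀ : (0 : ℝ) < γ := NNReal.coe_pos.mpr (pos_iff_ne_zero.mpr hγ)
  have hden := div_le_norm_sq_add_sq (abs_im_zetaC_sub_le ha u u₀) γ
  rw [← norm_pos_iff, norm_Kker_ofReal_mul_I, abs_of_pos hγ₀]
  exact div_pos (by positivity) (lt_of_lt_of_le (by positivity) hden)

theorem enorm_integral_Kker_mul_le (ha : LipschitzWith K a) (γ : ℝ≥0) (u₀ : ℝ) (g : ℝ → ℂ) :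
    ‖∫ u, Kker ((γ : ℝ) * I) (zetaC a u) (zetaC a u₀) * g u * (1 + I * ((deriv a u : ℝ) : ℂ))‖ₑ
      ≤ ENNReal.ofReal ((2 + K ^ 2) * √(1 + K ^ 2)) * ∫⁻ u, cauchyPDF u₀ γ u * ‖g u‖ₑ := by
  rw [← lintegral_const_mul' _ _ ENNReal.ofReal_ne_top]
  refine (enorm_integral_le_lintegral_enorm _).trans (lintegral_mono fun u => ?_)
  have hK : ‖Kker ((γ : ℝ) * I) (zetaC a u) (zetaC a u₀)‖ₑ
      ≤ ENNReal.ofReal (2 + K ^ 2) * cauchyPDF u₀ γ u := by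
    rw [cauchyPDF_def, ← ENNReal.ofReal_mul (by positivity), ← ofReal_norm]
    exact ENNReal.ofReal_le_ofReal (norm_Kker_le_mul_cauchyPDFReal ha γ u u₀)
  have hc : ‖1 + I * ((deriv a u : ℝ) : ℂ)‖ₑ ≤ ENNReal.ofReal √(1 + K ^ 2) := by
    rw [← ofReal_norm, norm_one_add_I_mul_deriv]
    exact ENNReal.ofReal_le_ofReal (arcDen_le ha u)
  calc ‖Kker ((γ : ℝ) * I) (zetaC a u) (zetaC a u₀) * g u * (1 + I * ((deriv a u : ℝ) : ℂ))‖ₑ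
      = ‖Kker ((γ : ℝ) * I) (zetaC a u) (zetaC a u₀)‖ₑ * ‖g u‖ₑ
          * ‖1 + I * ((deriv a u : ℝ) : ℂ)‖ₑ := by rw [enorm_mul, enorm_mul]
    _ ≤ ENNReal.ofReal (2 + K ^ 2) * cauchyPDF u₀ γ u * ‖g u‖ₑ
          * ENNReal.ofReal √(1 + K ^ 2) := by gcongr
    _ = ENNReal.ofReal ((2 + K ^ 2) * √(1 + K ^ 2)) * (cauchyPDF u₀ γ u * ‖g u‖ₑ) := by
        rw [ENNReal.ofReal_mul (by positivity)]; ring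

theorem integral_Kker_mul_eq_zero (ha : LipschitzWith K a) {γ : ℝ≥0} (hγ : γ ≠ 0) {g : ℝ → ℂ}
    (hg : ¬AEStronglyMeasurable g) (u₀ : ℝ) :
    ∫ u, Kker ((γ : ℝ) * I) (zetaC a u) (zetaC a u₀) * g u * (1 + I * ((deriv a u : ℝ) : ℂ))
      = 0 := by
  have hζ : Continuous (zetaC a) := by have := ha.continuous; unfold zetaC; fun_prop
  have hmeas : Measurable fun u =>
      Kker ((γ : ℝ) * I) (zetaC a u) (zetaC a u₀) * (1 + I * ((deriv a u : ℝ) : ℂ)) := by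
    unfold Kker; fun_prop
  have hne : ∀ u,
      Kker ((γ : ℝ) * I) (zetaC a u) (zetaC a u₀) * (1 + I * ((deriv a u : ℝ) : ℂ)) ≠ 0 :=
    fun u => mul_ne_zero (Kker_ne_zero ha hγ u u₀) <| norm_pos_iff.mp <| by
      rw [norm_one_add_I_mul_deriv]; exact one_pos.trans_le (one_le_arcDen u)
  rw [← integral_mul_eq_zero_of_not_aestronglyMeasurable hmeas hne hg]
  congr 1 with u
  ring

theorem lintegral_enorm_rpow_le_lintegral_mul_arcDen (hp : 0 ≤ p) (g : ℝ → ℂ) :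
    ∫⁻ u, ‖g u‖ₑ ^ p ≤ ∫⁻ u, ENNReal.ofReal (‖g u‖ ^ p * arcDen a u) :=
  lintegral_mono fun u => by
    rw [← ofReal_norm, ENNReal.ofReal_rpow_of_nonneg (norm_nonneg _) hp]
    exact ENNReal.ofReal_le_ofReal (le_mul_of_one_le_right (by positivity) (one_le_arcDen u))

theorem bdryInt_le_mul_lintegral_enorm_rpow (ha : LipschitzWith K a) (hp : 0 ≤ p) (F : ℂ → ℂ)
    (τ : ℝ) :
    bdryInt a p F τ ≤ ENNReal.ofReal √(1 + K ^ 2) * ∫⁻ u, ‖F (zetaC a u + τ * I)‖ₑ ^ p := by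
  rw [bdryInt, ← lintegral_const_mul' _ _ ENNReal.ofReal_ne_top]
  refine lintegral_mono fun u => ?_
  rw [← ofReal_norm, ENNReal.ofReal_rpow_of_nonneg (norm_nonneg _) hp,
    ← ENNReal.ofReal_mul (by positivity), mul_comm]
  exact ENNReal.ofReal_le_ofReal (mul_le_mul_of_nonneg_right (arcDen_le ha u) (by positivity))

theorem bdryInt_le_of_aestronglyMeasurable (ha : LipschitzWith K a) (hp : 1 ≤ p) {g : ℝ → ℂ}
    (hg : AEStronglyMeasurable g) {F : ℂ → ℂ} {γ : ℝ≥0} (hγ : γ ≠ 0)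
    (hF : ∀ u₀, F (zetaC a u₀ + ((γ : ℝ) : ℂ) * I) = ∫ u, Kker ((γ : ℝ) * I) (zetaC a u)
      (zetaC a u₀) * g u * (1 + I * ((deriv a u : ℝ) : ℂ))) :
    bdryInt a p F γ ≤ ENNReal.ofReal √(1 + K ^ 2) *
      (ENNReal.ofReal ((2 + K ^ 2) * √(1 + K ^ 2)) ^ p * ∫⁻ u, ‖g u‖ₑ ^ p) := by
  have hp₀ : 0 ≤ p := zero_le_one.trans hp
  set C := ENNReal.ofReal ((2 + K ^ 2) * √(1 + K ^ 2))
  calc bdryInt a p F γ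
      ≤ ENNReal.ofReal √(1 + K ^ 2) * ∫⁻ u₀, ‖F (zetaC a u₀ + ((γ : ℝ) : ℂ) * I)‖ₑ ^ p :=
        bdryInt_le_mul_lintegral_enorm_rpow ha hp₀ F γ
    _ ≤ ENNReal.ofReal √(1 + K ^ 2) * ∫⁻ u₀, (C * ∫⁻ u, cauchyPDF u₀ γ u * ‖g u‖ₑ) ^ p := by
        gcongr with u₀
        rw [hF]
        exact enorm_integral_Kker_mul_le ha γ u₀ g
    _ = ENNReal.ofReal √(1 + K ^ 2) *
          (C ^ p * ∫⁻ u₀, (∫⁻ u, cauchyPDF u₀ γ u * ‖g u‖ₑ) ^ p) := by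
        simp_rw [ENNReal.mul_rpow_of_nonneg _ _ hp₀]
        rw [lintegral_const_mul' _ _ (ENNReal.rpow_ne_top_of_nonneg hp₀ ENNReal.ofReal_ne_top)]
    _ ≤ ENNReal.ofReal √(1 + K ^ 2) * (C ^ p * ∫⁻ u, ‖g u‖ₑ ^ p) := by
        gcongr _ * (_ * ?_)
        refine lintegral_rpow_lintegral_mul_le (μ := volume) (ν := volume)
          (measurable_uncurry_cauchyPDF γ) (fun u₀ => (lintegral_cauchyPDF_eq_one u₀ hγ).le)
          (fun u => ?_) hg.enorm hp
        simp_rw [cauchyPDF_comm _ γ u]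
        exact (lintegral_cauchyPDF_eq_one u hγ).le

theorem bdryInt_eq_zero_of_not_aestronglyMeasurable (ha : LipschitzWith K a) (hp : 0 < p)
    {g : ℝ → ℂ} (hg : ¬AEStronglyMeasurable g) {F : ℂ → ℂ} {γ : ℝ≥0} (hγ : γ ≠ 0)
    (hF : ∀ u₀, F (zetaC a u₀ + ((γ : ℝ) : ℂ) * I) = ∫ u, Kker ((γ : ℝ) * I) (zetaC a u)
      (zetaC a u₀) * g u * (1 + I * ((deriv a u : ℝ) : ℂ))) :
    bdryInt a p F γ = 0 := by
  simp [bdryInt, hF, integral_Kker_mul_eq_zero ha hγ hg, Real.zero_rpow hp.ne']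

end LipschitzGraph

theorem hardy_lipschitz_kernel_bounded_general
    (M : ℝ) (a : ℝ → ℝ)
    (ha : ∀ u₁ u₂ : ℝ, |a u₁ - a u₂| ≤ M * |u₁ - u₂|)
    (p : ℝ) (hp : 1 ≤ p)
    (g : ℝ → ℂ)
    (hg : (∫⁻ u : ℝ, ENNReal.ofReal (‖g u‖ ^ p * arcDen a u)) < ⊤)
    (F : ℂ → ℂ)
    (hF : ∀ u₀ τ : ℝ, 0 < τ →
      F (zetaC a u₀ + (τ : ℂ) * Complex.I)
        = ∫ u : ℝ, Kker ((τ : ℂ) * Complex.I) (zetaC a u) (zetaC a u₀) * g u *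
            (1 + Complex.I * Complex.ofReal (deriv a u))) :
    HpPow a p F < ⊤ := by
  have hp₀ : 0 < p := one_pos.trans_le hp
  have hlip : LipschitzWith M.toNNReal a :=
    LipschitzWith.of_dist_le' fun x y => by simpa only [Real.dist_eq] using ha x y
  have hgp : ∫⁻ u, ‖g u‖ₑ ^ p < ⊤ :=
    (lintegral_enorm_rpow_le_lintegral_mul_arcDen hp₀.le g).trans_lt hg
  have hbound : ENNReal.ofReal √(1 + M.toNNReal ^ 2) * (ENNReal.ofReal ((2 + M.toNNReal ^ 2) *
      √(1 + M.toNNReal ^ 2)) ^ p * ∫⁻ u, ‖g u‖ₑ ^ p) < ⊤ :=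
    ENNReal.mul_lt_top ENNReal.ofReal_lt_top <|
      ENNReal.mul_lt_top (ENNReal.rpow_lt_top_of_nonneg hp₀.le ENNReal.ofReal_ne_top) hgp
  refine (iSup₂_le fun τ hτ => ?_).trans_lt hbound
  lift τ to ℝ≥0 using hτ.le
  have hτ₀ : τ ≠ 0 := by rintro rfl; exact hτ.false
  -- Unless `g` is a.e. strongly measurable, the integrals defining `F` take the junk value `0`.
  by_cases hmg : AEStronglyMeasurable g
  · exact bdryInt_le_of_aestronglyMeasurable hlip hp hmg hτ₀ fun u₀ => hF u₀ τ hτ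
  · rw [bdryInt_eq_zero_of_not_aestronglyMeasurable hlip hp₀ hmg hτ₀ fun u₀ => hF u₀ τ hτ]
    exact zero_le

/-- If `g ∈ L^p(Γ, |dζ|)` (`1 ≤ p < ∞`) and `F` is defined on
`Ω₊` by `F(ζ₀ + iτ) = ∫_Γ K_{iτ}(ζ, ζ₀) g(ζ) dζ`, then
`sup_{τ>0} ∫_Γ |F(ζ + iτ)|^p |dζ| < ∞`. -/
theorem hardy_lipschitz_kernel_bounded
    (M : ℝ) (hM : 0 < M) (a : ℝ → ℝ)
    (ha : ∀ u₁ u₂ : ℝ, |a u₁ - a u₂| ≤ M * |u₁ - u₂|)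
    (p : ℝ) (hp : 1 ≤ p)
    (g : ℝ → ℂ)
    (hg : (∫⁻ u : ℝ, ENNReal.ofReal (‖g u‖ ^ p * arcDen a u)) < ⊤)
    (F : ℂ → ℂ)
    (hF : ∀ u₀ τ : ℝ, 0 < τ →
      F (zetaC a u₀ + (τ : ℂ) * Complex.I)
        = ∫ u : ℝ, Kker ((τ : ℂ) * Complex.I) (zetaC a u) (zetaC a u₀) * g u *
            (1 + Complex.I * Complex.ofReal (deriv a u))) :
    HpPow a p F < ⊤ :=
  hardy_lipschitz_kernel_bounded_general M a ha p hp g hg F hF
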